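/- Let q be a prime power, n a positive integer with gcd(n,q)=1, K an extension field of F_q over which xⁿ−1 splits into linear factors, and α ∈ K a primitive n-th root of unity. For M ⊆ Z/nZ let B(M) = {(f(α⁰), f(α¹), …, f(α^{n−1})) : f ∈ K[x], f = Σ_{i∈M} f_i x^i}. If C is a cyclic code of length n over F_q with generating set I, then the extension of scalars of C to K (i.e. the K-linear span of C inside Kⁿ) equals B(−I); in particular dim_K B(−I) = |I| = dim_{F_q} C. -/

import Mathlib

open Polynomial Pointwise

noncomputable section

/-- The `F`-linear map sending a word `(c₀,…,c_{n-1})` to the polynomial `∑ cᵢ xⁱ`. -/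
def wordToPoly (F : Type*) [Field F] (n : ℕ) : (Fin n → F) →ₗ[F] Polynomial F where
  toFun c := ∑ i : Fin n, Polynomial.C (c i) * Polynomial.X ^ (i : ℕ)
  map_add' a b := by
    simp [map_add, add_mul, Finset.sum_add_distrib]
  map_smul' r a := by
    simp [Finset.smul_sum, Polynomial.smul_eq_C_mul, map_mul, mul_assoc]

/-- The cyclic code of length `n` over `F` with generator polynomial `g`:
all words whose associated polynomial is a multiple of `g` in `F[x]`. -/
def cyclicCode (F : Type*) [Field F] (n : ℕ) (g : Polynomial F) :
    Submodule F (Fin n → F) :=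
  Submodule.comap (wordToPoly F n) (Submodule.restrictScalars F (Ideal.span {g}))

section Helpers

variable {E : Type*} [Field E] {n : ℕ}

lemma wordToPoly_coeff (c : Fin n → E) (i : ℕ) :
    (wordToPoly E n c).coeff i = if h : i < n then c ⟨i, h⟩ else 0 := by
  simp only [wordToPoly, LinearMap.coe_mk, AddHom.coe_mk, finset_sum_coeff,
    coeff_C_mul, coeff_X_pow]
  split
  · next h =>
    rw [Finset.sum_eq_single (⟨i, h⟩ : Fin n)]
    · simp
    · intro b _ hb
      have : i ≠ (b : ℕ) := fun hib => hb (by ext; simp [← hib])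
      simp [this]
    · simp
  · next h =>
    apply Finset.sum_eq_zero
    intro b _
    have : i ≠ (b : ℕ) := fun hib => h (hib ▸ b.isLt)
    simp [this]

lemma wordToPoly_degree (c : Fin n → E) : (wordToPoly E n c).degree < n := by
  rw [degree_lt_iff_coeff_zero]
  intro m hm
  rw [wordToPoly_coeff]
  simp [Nat.not_lt.mpr hm]

lemma wordToPoly_of_coeff (P : Polynomial E) (hP : P.degree < n) :
    wordToPoly E n (fun j => P.coeff j) = P := by
  ext i
  rw [wordToPoly_coeff]
  split
  · rfl
  · next h =>
    exact (coeff_eq_zero_of_degree_lt (lt_of_lt_of_le hP (by simpa using Nat.not_lt.mp h))).symm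

lemma wordToPoly_eval (c : Fin n → E) (x : E) :
    (wordToPoly E n c).eval x = ∑ k : Fin n, c k * x ^ (k : ℕ) := by
  simp [wordToPoly, eval_finset_sum]

lemma mem_cyclicCode {g : Polynomial E} {v : Fin n → E} :
    v ∈ cyclicCode E n g ↔ g ∣ wordToPoly E n v := by
  simp [cyclicCode, Ideal.mem_span_singleton]


/-- The multiplication-by-`g` encoder. -/
def encoder (E : Type*) [Field E] (n : ℕ) (g : Polynomial E) :
    (Fin (n - g.natDegree) → E) →ₗ[E] (Fin n → E) :=
  (LinearMap.pi fun j : Fin n => Polynomial.lcoeff E (j : ℕ)).comp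
    ((LinearMap.mulLeft E g).comp (wordToPoly E (n - g.natDegree)))

lemma encoder_apply {g : Polynomial E} (f : Fin (n - g.natDegree) → E) (j : Fin n) :
    encoder E n g f j = (g * wordToPoly E (n - g.natDegree) f).coeff (j : ℕ) := rfl

lemma degree_encoder_mul {g : Polynomial E} (hd : g.natDegree ≤ n)
    (f : Fin (n - g.natDegree) → E) :
    (g * wordToPoly E (n - g.natDegree) f).degree < n := by
  rcases eq_or_ne (wordToPoly E (n - g.natDegree) f) 0 with h | h
  · simp only [h, mul_zero, degree_zero]
    exact WithBot.bot_lt_coe n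
  rcases eq_or_ne g 0 with hg | hg
  · simp only [hg, zero_mul, degree_zero]
    exact WithBot.bot_lt_coe n
  rw [degree_mul]
  have h1 : g.degree ≤ (g.natDegree : WithBot ℕ) := degree_le_natDegree
  have h2 : (wordToPoly E (n - g.natDegree) f).degree < (n - g.natDegree : ℕ) :=
    wordToPoly_degree f
  calc g.degree + (wordToPoly E (n - g.natDegree) f).degree
      < (g.natDegree : WithBot ℕ) + (n - g.natDegree : ℕ) := by
        apply WithBot.add_lt_add_of_le_of_lt (by simpa using hg) h1 h2
    _ = ((g.natDegree + (n - g.natDegree) : ℕ) : WithBot ℕ) := by push_cast; ring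
    _ = (n : WithBot ℕ) := by rw [Nat.add_sub_cancel' hd]

lemma encoder_injective {g : Polynomial E} (hg : g ≠ 0) (hd : g.natDegree ≤ n) :
    Function.Injective (encoder E n g) := by
  rw [← LinearMap.ker_eq_bot]
  ext f
  simp only [LinearMap.mem_ker, Submodule.mem_bot]
  constructor
  · intro hf
    have hzero : g * wordToPoly E (n - g.natDegree) f = 0 := by
      apply Polynomial.ext
      intro i
      by_cases hi : i < n
      · have := congrFun hf ⟨i, hi⟩
        simpa [encoder_apply] using this
      · rw [coeff_eq_zero_of_degree_lt (lt_of_lt_of_le (degree_encoder_mul hd f)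
          (by simpa using Nat.not_lt.mp hi))]
        simp
    have hw : wordToPoly E (n - g.natDegree) f = 0 := by
      rcases mul_eq_zero.mp hzero with h | h
      · exact absurd h hg
      · exact h
    ext i
    have := congrArg (fun p => Polynomial.coeff p (i : ℕ)) hw
    simpa [wordToPoly_coeff, i.isLt] using this
  · rintro rfl; simp

lemma range_encoder {g : Polynomial E} (hg : g ≠ 0) (hd : g.natDegree ≤ n) :
    LinearMap.range (encoder E n g) = cyclicCode E n g := by
  ext v
  simp only [LinearMap.mem_range, mem_cyclicCode]
  constructor
  · rintro ⟨f, rfl⟩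
    have : wordToPoly E n (encoder E n g f) = g * wordToPoly E (n - g.natDegree) f := by
      have := wordToPoly_of_coeff (n := n) (g * wordToPoly E (n - g.natDegree) f)
        (degree_encoder_mul hd f)
      rw [← this]
      rfl
    rw [this]
    exact dvd_mul_right _ _
  · rintro ⟨h, hh⟩
    rcases eq_or_ne h 0 with rfl | hh0
    · refine ⟨0, ?_⟩
      have hv : ∀ j : Fin n, v j = 0 := by
        intro j
        have := congrArg (fun p => Polynomial.coeff p (j : ℕ)) hh
        simpa [wordToPoly_coeff, j.isLt] using this
      ext j
      simp [encoder_apply, hv j]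
    · have hdeg : h.natDegree < n - g.natDegree := by
        have hgh : g * h ≠ 0 := mul_ne_zero hg hh0
        have h1 : (g * h).degree < n := hh ▸ wordToPoly_degree v
        have h2 : (g * h).natDegree < n := by
          rwa [← Polynomial.natDegree_lt_iff_degree_lt hgh] at h1
        rw [Polynomial.natDegree_mul hg hh0] at h2
        omega
      refine ⟨fun i => h.coeff (i : ℕ), ?_⟩
      have hword : wordToPoly E (n - g.natDegree) (fun i => h.coeff (i : ℕ)) = h := by
        apply wordToPoly_of_coeff
        exact lt_of_le_of_lt degree_le_natDegree (by exact_mod_cast hdeg)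
      ext j
      rw [encoder_apply, hword, ← hh]
      simp [wordToPoly_coeff, j.isLt]

lemma finrank_cyclicCode {g : Polynomial E} (hg : g ≠ 0) (hd : g.natDegree ≤ n) :
    Module.finrank E (cyclicCode E n g) = n - g.natDegree := by
  rw [← range_encoder hg hd, LinearMap.finrank_range_of_inj (encoder_injective hg hd)]
  simp [Module.finrank_pi]

lemma wordToPoly_map {F K : Type*} [Field F] [Field K] (φ : F →+* K) (c : Fin n → F) :
    wordToPoly K n (fun j => φ (c j)) = (wordToPoly F n c).map φ := by
  ext i
  rw [wordToPoly_coeff, Polynomial.coeff_map, wordToPoly_coeff, apply_dite φ, map_zero]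

lemma wordToPoly_single {E : Type*} [Field E] {n : ℕ} (i : Fin n) :
    wordToPoly E n (Pi.single i (1 : E)) = X ^ (i : ℕ) := by
  ext k
  rw [wordToPoly_coeff]
  rw [Polynomial.coeff_X_pow]
  split
  · next h =>
    simp only [Pi.single_apply]
    by_cases hk : (⟨k, h⟩ : Fin n) = i
    · have hki : k = (i : ℕ) := by rw [← hk]
      simp [hk, hki]
    · have : k ≠ (i : ℕ) := fun hh => hk (by ext; simp [hh])
      simp [hk, this]
  · next h =>
    have : k ≠ (i : ℕ) := fun hh => h (hh ▸ i.isLt)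
    simp [this]

lemma span_image_cyclicCode {F K : Type*} [Field F] [Field K] [Algebra F K]
    {g : Polynomial F} (hg : g ≠ 0) (hd : g.natDegree ≤ n) :
    Submodule.span K
        ((fun (c : Fin n → F) (j : Fin n) => algebraMap F K (c j)) '' (cyclicCode F n g)) =
      cyclicCode K n (g.map (algebraMap F K)) := by
  set φ := algebraMap F K
  have hg' : g.map φ ≠ 0 := by
    simpa using (Polynomial.map_ne_zero_iff φ.injective).mpr hg
  have hd' : (g.map φ).natDegree ≤ n := by rwa [natDegree_map]
  apply le_antisymm
  · rw [Submodule.span_le]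
    rintro _ ⟨c, hc, rfl⟩
    rw [SetLike.mem_coe, mem_cyclicCode] at hc ⊢
    rw [wordToPoly_map]
    exact Polynomial.map_dvd φ hc
  · rw [← range_encoder hg' hd']
    rintro _ ⟨f, rfl⟩
    have hf : f = ∑ i, f i • (Pi.single i 1 : Fin (n - (g.map φ).natDegree) → K) := by
      ext j
      rw [Finset.sum_apply]
      simp [Pi.single_apply]
    rw [hf, map_sum]
    apply Submodule.sum_mem
    intro i _
    rw [map_smul]
    apply Submodule.smul_mem
    apply Submodule.subset_span
    have hilt : (i : ℕ) < n - g.natDegree := by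
      have h1 := i.isLt
      have h2 : (g.map φ).natDegree = g.natDegree := natDegree_map φ
      omega
    have hdeg : (g * X ^ (i : ℕ)).degree < (n : WithBot ℕ) := by
      rw [degree_mul, degree_X_pow, degree_eq_natDegree hg]
      rw [← Nat.cast_add, Nat.cast_lt]
      omega
    refine ⟨fun j : Fin n => (g * X ^ (i : ℕ)).coeff (j : ℕ), ?_, ?_⟩
    · rw [SetLike.mem_coe, mem_cyclicCode, wordToPoly_of_coeff _ hdeg]
      exact dvd_mul_right _ _
    · ext j
      show φ ((g * X ^ (i : ℕ)).coeff (j : ℕ)) = _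
      rw [encoder_apply, wordToPoly_single,
        show (g.map φ) * X ^ (i:ℕ) = (g * X ^ (i:ℕ)).map φ by
          rw [Polynomial.map_mul, Polynomial.map_pow, Polynomial.map_X],
        Polynomial.coeff_map]

lemma pow_zmod_eq {K : Type*} [Field K] {n : ℕ} [NeZero n] {α : K} (hα : IsPrimitiveRoot α n)
    {a b : ℕ} (h : (a : ZMod n) = (b : ZMod n)) : α ^ a = α ^ b := by
  rw [ZMod.natCast_eq_natCast_iff'] at h
  have key : ∀ c : ℕ, α ^ c = α ^ (c % n) := by
    intro c
    conv_lhs => rw [← Nat.mod_add_div c n]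
    rw [pow_add, pow_mul, hα.pow_eq_one, one_pow, mul_one]
  rw [key a, key b, h]

lemma geom_sum_prim {K : Type*} [Field K] {n : ℕ} [NeZero n] {α : K}
    (hα : IsPrimitiveRoot α n) (m : ℕ) :
    ∑ i : Fin n, α ^ (m * (i : ℕ)) = if (m : ZMod n) = 0 then (n : K) else 0 := by
  have hterm : ∀ i : Fin n, α ^ (m * (i:ℕ)) = (α ^ m) ^ (i:ℕ) := fun i => by rw [pow_mul]
  simp_rw [hterm]
  rw [Fin.sum_univ_eq_sum_range (fun i => (α ^ m) ^ i) n]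
  by_cases h1 : α ^ m = 1
  · rw [if_pos]
    · simp [h1]
    · rw [ZMod.natCast_eq_zero_iff]
      exact (hα.pow_eq_one_iff_dvd m).mp h1
  · rw [if_neg]
    · rw [geom_sum_eq h1]
      have hone : (α ^ m) ^ n = 1 := by
        rw [← pow_mul, mul_comm, pow_mul, hα.pow_eq_one, one_pow]
      rw [hone, sub_self, zero_div]
    · rw [ZMod.natCast_eq_zero_iff]
      exact fun hd => h1 ((hα.pow_eq_one_iff_dvd m).mpr hd)

lemma eval_word_dft {K : Type*} [Field K] {n : ℕ} [NeZero n] {α : K}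
    (hα : IsPrimitiveRoot α n)
    (v : Fin n → K) (f : Polynomial K) (hf : ∀ i : ℕ, f.coeff i ≠ 0 → i < n)
    (hv : ∀ j : Fin n, v j = f.eval (α ^ (j : ℕ))) (m : ℕ) :
    (wordToPoly K n v).eval (α ^ m) = (n : K) * f.coeff ((-(m : ZMod n)).val) := by
  have hnd : f.natDegree < n := by
    rcases eq_or_ne f 0 with rfl | hf0
    · simpa using Nat.pos_of_ne_zero (NeZero.ne n)
    · exact hf _ (by rwa [coeff_natDegree, Ne, leadingCoeff_eq_zero])
  rw [wordToPoly_eval]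
  have hvk : ∀ k : Fin n, v k = ∑ i ∈ Finset.range n, f.coeff i * (α ^ (k:ℕ)) ^ i :=
    fun k => by rw [hv k, eval_eq_sum_range' hnd]
  calc ∑ k : Fin n, v k * (α ^ m) ^ (k : ℕ)
      = ∑ k : Fin n, ∑ i ∈ Finset.range n, f.coeff i * α ^ ((i + m) * (k:ℕ)) := by
        apply Finset.sum_congr rfl; intro k _
        rw [hvk k, Finset.sum_mul]
        apply Finset.sum_congr rfl; intro i _
        rw [mul_assoc, ← pow_mul, ← pow_mul, ← pow_add]
        congr 2
        ring
    _ = ∑ i ∈ Finset.range n, f.coeff i * ∑ k : Fin n, α ^ ((i + m) * (k:ℕ)) := by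
        rw [Finset.sum_comm]
        simp_rw [Finset.mul_sum]
    _ = ∑ i ∈ Finset.range n, f.coeff i *
          (if ((i + m : ℕ) : ZMod n) = 0 then (n:K) else 0) := by
        simp_rw [geom_sum_prim hα]
    _ = (n : K) * f.coeff ((-(m : ZMod n)).val) := ?_
  rw [Finset.sum_eq_single ((-(m : ZMod n)).val)]
  · rw [if_pos, mul_comm]
    rw [Nat.cast_add, ZMod.natCast_zmod_val]
    exact neg_add_cancel _
  · intro b hb hbne
    rw [if_neg, mul_zero]
    intro hc
    apply hbne
    rw [Nat.cast_add] at hc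
    have hb' : (b : ZMod n) = -(m : ZMod n) := eq_neg_of_add_eq_zero_left hc
    rw [← hb', ZMod.val_cast_of_lt (Finset.mem_range.mp hb)]
  · intro hi
    exact absurd (Finset.mem_range.mpr (ZMod.val_lt _)) hi

end Helpers

/-- The defining set `J = {j ∈ ℤ/nℤ : g(αʲ) = 0}` of a cyclic code with generator `g`,
w.r.t. a fixed primitive `n`-th root of unity `α` in an extension `K` of `F`. -/
def definingSet {F K : Type*} [Field F] [Field K] [Algebra F K] (n : ℕ) [NeZero n]
    (g : Polynomial F) (α : K) : Set (ZMod n) :=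
  {j | Polynomial.aeval (α ^ j.val) g = 0}

/-- The generating set `I = {j ∈ ℤ/nℤ : g(αʲ) ≠ 0}` of a cyclic code with generator `g`. -/
def generatingSet {F K : Type*} [Field F] [Field K] [Algebra F K] (n : ℕ) [NeZero n]
    (g : Polynomial F) (α : K) : Set (ZMod n) :=
  {j | Polynomial.aeval (α ^ j.val) g ≠ 0}

/-- The star (Schur) product of two linear codes: the span of all componentwise products. -/
def starProd {F : Type*} [Field F] {ι : Type*} (C D : Submodule F (ι → F)) :
    Submodule F (ι → F) :=
  Submodule.span F {v | ∃ c ∈ C, ∃ d ∈ D, v = fun i => c i * d i}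

/-- For `M ⊆ ℤ/nℤ`, the `K`-code
`B(M) = {(f(α⁰), f(α¹), …, f(α^{n-1})) : f = ∑_{i ∈ M} fᵢ xⁱ ∈ K[x]}`,
where the exponents of `f` are the representatives in `{0,…,n-1}` of elements of `M`. -/
def evalCode {K : Type*} [Field K] (n : ℕ) [NeZero n] (α : K) (M : Set (ZMod n)) :
    Set (Fin n → K) :=
  {v | ∃ f : Polynomial K,
    (∀ i : ℕ, f.coeff i ≠ 0 → i < n ∧ ((i : ZMod n) ∈ M)) ∧
    ∀ j : Fin n, v j = f.eval (α ^ (j : ℕ))}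

/-- The extension of scalars to `K` of a cyclic code `C` over `F`
with generating set `I` (i.e. the `K`-linear span of `C` inside `Kⁿ`) equals `B(-I)`;
in particular `dim_K B(-I) = |I| = dim_F C`. -/
theorem extension_of_scalars_of_cyclic_code_eq_evalCode
    {F K : Type*} [Field F] [Fintype F] [Field K] [Algebra F K]
    (n : ℕ) [NeZero n] (hcop : Nat.Coprime n (Fintype.card F))
    (hsplit : Polynomial.Splits ((X ^ n - 1 : Polynomial F).map (algebraMap F K)))
    (α : K) (hα : IsPrimitiveRoot α n)
    (g : Polynomial F) (hg : g.Monic) (hdvd : g ∣ X ^ n - 1)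
    (I : Set (ZMod n)) (hI : I = generatingSet n g α) :
    (Submodule.span K
        ((fun (c : Fin n → F) (j : Fin n) => algebraMap F K (c j)) '' (cyclicCode F n g)) :
      Set (Fin n → K)) = evalCode n α (-I) ∧
    Module.finrank K
        (Submodule.span K
          ((fun (c : Fin n → F) (j : Fin n) => algebraMap F K (c j)) '' (cyclicCode F n g))) =
      I.ncard ∧
    I.ncard = Module.finrank F (cyclicCode F n g) := by
  classical
  set φ := algebraMap F K with hφ
  set g' := g.map φ with hg'def
  -- basic facts
  have hgne : g ≠ 0 := hg.ne_zero
  have hXnmonic : (X ^ n - 1 : Polynomial F).Monic := by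
    have := monic_X_pow_sub_C (1 : F) (NeZero.ne n)
    rwa [map_one] at this
  have hXn_ne : (X ^ n - 1 : Polynomial F) ≠ 0 := hXnmonic.ne_zero
  have hd : g.natDegree ≤ n := by
    have h1 := Polynomial.natDegree_le_of_dvd hdvd hXn_ne
    rwa [show (X ^ n - 1 : Polynomial F) = X ^ n - C 1 by rw [map_one],
      natDegree_X_pow_sub_C] at h1
  have hnF : (n : F) ≠ 0 := by
    intro h
    set p := ringChar F with hpdef
    have hpinst : CharP F p := ringChar.charP F
    obtain ⟨m, hprime, hcard⟩ := FiniteField.card F p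
    have hdvd_n : p ∣ n := (CharP.cast_eq_zero_iff F p n).mp h
    have hdvd_q : p ∣ Fintype.card F := by
      rw [hcard]
      exact dvd_pow_self p (by exact_mod_cast m.ne_zero)
    have hp1 : p ∣ 1 := hcop ▸ Nat.dvd_gcd hdvd_n hdvd_q
    exact hprime.one_lt.ne' (Nat.dvd_one.mp hp1)
  have hnK : (n : K) ≠ 0 := by
    intro h
    apply hnF
    have h2 : φ (n : F) = 0 := by rw [map_natCast, h]
    exact (_root_.map_eq_zero φ).mp h2
  have hsep : (X ^ n - 1 : Polynomial F).Separable := by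
    have := Polynomial.separable_X_pow_sub_C (1 : F) hnF one_ne_zero
    rwa [map_one] at this
  have hg'sep : g'.Separable := (hsep.of_dvd hdvd).map
  have hg'ne : g' ≠ 0 := by
    simpa [hg'def] using (Polynomial.map_ne_zero_iff φ.injective).mpr hgne
  have hg'd : g'.natDegree = g.natDegree := natDegree_map φ
  have hd' : g'.natDegree ≤ n := hg'd ▸ hd
  have hsplits : g'.Splits :=
    hsplit.of_dvd ((Polynomial.map_ne_zero_iff φ.injective).mpr hXn_ne) (Polynomial.map_dvd φ hdvd)
  have hg'dvd : g' ∣ (X ^ n - 1 : Polynomial K) := by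
    have h1 := Polynomial.map_dvd φ hdvd
    rwa [Polynomial.map_sub, Polynomial.map_pow, Polynomial.map_X, Polynomial.map_one] at h1
  have root_pow : ∀ r : K, g'.eval r = 0 → r ^ n = 1 := by
    intro r hr
    obtain ⟨t, ht⟩ := hg'dvd
    have h1 : (X ^ n - 1 : Polynomial K).eval r = 0 := by rw [ht, eval_mul, hr, zero_mul]
    have h2 : r ^ n - 1 = 0 := by simpa using h1
    exact sub_eq_zero.mp h2
  have aeval_eq : ∀ x : K, Polynomial.aeval x g = g'.eval x := fun x => by
    rw [Polynomial.aeval_def, hg'def, Polynomial.eval_map]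
  -- Step 1: the span equals the cyclic code over K with generator g'
  have hspan : Submodule.span K
      ((fun (c : Fin n → F) (j : Fin n) => algebraMap F K (c j)) '' (cyclicCode F n g)) =
      cyclicCode K n g' := span_image_cyclicCode hgne hd
  -- Step 2: the cyclic code over K equals the eval code
  have hset : (cyclicCode K n g' : Set (Fin n → K)) = evalCode n α (-I) := by
    ext v
    constructor
    · intro hv
      rw [SetLike.mem_coe, mem_cyclicCode] at hv
      set c := wordToPoly K n v with hc
      obtain ⟨t, ht⟩ := hv
      set w : Fin n → K := fun i => c.eval (α ^ ((-((i : ℕ) : ZMod n)).val)) with hw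
      refine ⟨Polynomial.C ((n : K)⁻¹) * wordToPoly K n w, ?_, ?_⟩
      · intro i hi
        rw [coeff_C_mul, wordToPoly_coeff] at hi
        by_cases hin : i < n
        · refine ⟨hin, ?_⟩
          rw [Set.mem_neg, hI]
          intro hmem
          apply hi
          rw [dif_pos hin]
          have hz : g'.eval (α ^ ((-((i : ℕ) : ZMod n)).val)) = 0 := by
            rw [← aeval_eq]
            simpa [definingSet, generatingSet] using hmem
          have : w ⟨i, hin⟩ = 0 := by
            rw [hw]
            simp only
            rw [ht, eval_mul, hz, zero_mul]
          rw [this, mul_zero]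
        · rw [dif_neg hin, mul_zero] at hi
          exact absurd rfl hi
      · intro j
        rw [eval_mul, eval_C, wordToPoly_eval]
        -- compute the double sum
        have hterm : ∀ i : Fin n, w i * (α ^ (j : ℕ)) ^ (i : ℕ) =
            ∑ k : Fin n, v k * α ^ (((j : ℕ) + (-((k : ℕ) : ZMod n)).val) * (i : ℕ)) := by
          intro i
          rw [hw]
          simp only
          rw [hc, wordToPoly_eval, Finset.sum_mul]
          apply Finset.sum_congr rfl
          intro k _
          rw [mul_assoc]
          congr 1
          rw [← pow_mul, ← pow_mul, ← pow_add]
          apply pow_zmod_eq hα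
          push_cast [ZMod.natCast_zmod_val]
          ring
        simp_rw [hterm]
        rw [Finset.sum_comm]
        have hinner : ∀ k : Fin n,
            ∑ i : Fin n, v k * α ^ (((j : ℕ) + (-((k : ℕ) : ZMod n)).val) * (i : ℕ)) =
            v k * (if (((j : ℕ) + (-((k : ℕ) : ZMod n)).val : ℕ) : ZMod n) = 0
              then (n : K) else 0) := by
          intro k
          rw [← Finset.mul_sum, geom_sum_prim hα]
        simp_rw [hinner]
        rw [Finset.sum_eq_single j]
        · have hcond : ((((j : ℕ) + (-((j : ℕ) : ZMod n)).val : ℕ)) : ZMod n) = 0 := by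
            push_cast [ZMod.natCast_zmod_val]
            ring
          rw [if_pos hcond, mul_comm (v j) ((n : K)), ← mul_assoc,
            inv_mul_cancel₀ hnK, one_mul]
        · intro k _ hkj
          rw [if_neg, mul_zero]
          intro hzero
          apply hkj
          rw [Nat.cast_add, ZMod.natCast_zmod_val] at hzero
          have : ((j : ℕ) : ZMod n) = ((k : ℕ) : ZMod n) := by
            have := eq_neg_of_add_eq_zero_left hzero
            rwa [neg_neg] at this
          rw [ZMod.natCast_eq_natCast_iff] at this
          exact Fin.ext (Nat.ModEq.eq_of_lt_of_lt this j.isLt k.isLt).symm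
        · intro hj
          exact absurd (Finset.mem_univ j) hj
    · rintro ⟨f, hfsupp, hfeval⟩
      rw [SetLike.mem_coe, mem_cyclicCode]
      set c := wordToPoly K n v with hc
      rcases eq_or_ne c 0 with hc0 | hc0
      · rw [hc0]; exact dvd_zero _
      have hvanish : ∀ r ∈ g'.roots, c.eval r = 0 := by
        intro r hr
        have hroot : g'.eval r = 0 := (Polynomial.mem_roots hg'ne).mp hr
        obtain ⟨i, hin, rfl⟩ := hα.eq_pow_of_pow_eq_one (root_pow r hroot)
        rw [eval_word_dft hα v f (fun i hi => (hfsupp i hi).1) hfeval i]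
        have hcoeff : f.coeff ((-(( i : ℕ) : ZMod n)).val) = 0 := by
          by_contra hne
          obtain ⟨-, hmem⟩ := hfsupp _ hne
          rw [ZMod.natCast_zmod_val, Set.mem_neg, neg_neg, hI] at hmem
          apply hmem
          have : α ^ (((i : ℕ) : ZMod n)).val = α ^ i := by
            apply pow_zmod_eq hα
            rw [ZMod.natCast_zmod_val]
          rw [aeval_eq, this]
          exact hroot
        rw [hcoeff, mul_zero]
      have hle : g'.roots ≤ c.roots := by
        rw [Multiset.le_iff_count]
        intro r
        by_cases hr : r ∈ g'.roots
        · calc g'.roots.count r ≤ 1 := Multiset.nodup_iff_count_le_one.mp (nodup_roots hg'sep) r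
            _ ≤ c.roots.count r := by
              rw [Nat.one_le_iff_ne_zero, Ne, Multiset.count_eq_zero]
              intro hmem
              exact hmem ((Polynomial.mem_roots hc0).mpr (hvanish r hr))
        · rw [Multiset.count_eq_zero_of_notMem hr]
          exact Nat.zero_le _
      have hgprod : g' = (g'.roots.map fun a => X - C a).prod :=
        hsplits.eq_prod_roots_of_monic (hg.map φ)
      calc g' = (g'.roots.map fun a => X - C a).prod := hgprod
        _ ∣ (c.roots.map fun a => X - C a).prod :=
            Multiset.prod_dvd_prod_of_le (Multiset.map_le_map hle)
        _ ∣ c := prod_multiset_X_sub_C_dvd c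
  -- Step 3: counting
  have hJcard : (Finset.univ.filter
      (fun j : ZMod n => Polynomial.aeval (α ^ j.val) g = 0)).card = g.natDegree := by
    rw [← hg'd, ← (splits_iff_card_roots).mp hsplits,
      ← Multiset.toFinset_card_of_nodup (nodup_roots hg'sep)]
    apply Finset.card_bij (fun j _ => α ^ j.val)
    · intro j hj
      rw [Multiset.mem_toFinset, Polynomial.mem_roots hg'ne]
      show g'.eval _ = 0
      rw [← aeval_eq]
      exact (Finset.mem_filter.mp hj).2
    · intro j₁ _ j₂ _ hjj
      have := hα.pow_inj (ZMod.val_lt j₁) (ZMod.val_lt j₂) hjj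
      exact ZMod.val_injective n this
    · intro r hr
      rw [Multiset.mem_toFinset, Polynomial.mem_roots hg'ne] at hr
      obtain ⟨i, hin, rfl⟩ := hα.eq_pow_of_pow_eq_one (root_pow _ hr)
      refine ⟨(i : ZMod n), ?_, ?_⟩
      · rw [Finset.mem_filter]
        refine ⟨Finset.mem_univ _, ?_⟩
        rw [aeval_eq, ZMod.val_cast_of_lt hin]
        exact hr
      · rw [ZMod.val_cast_of_lt hin]
  have hIcard : I.ncard = n - g.natDegree := by
    have hcompl : Iᶜ = ((Finset.univ.filter
        (fun j : ZMod n => Polynomial.aeval (α ^ j.val) g = 0)) : Set (ZMod n)) := by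
      ext j
      simp [hI, generatingSet]
    have h1 := Set.ncard_add_ncard_compl I
    rw [hcompl, Set.ncard_coe_finset, hJcard, Nat.card_zmod] at h1
    omega
  refine ⟨?_, ?_, ?_⟩
  · rw [hspan, hset]
  · rw [hspan, finrank_cyclicCode hg'ne hd', hg'd, hIcard]
  · rw [finrank_cyclicCode hgne hd, hIcard]
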